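/- Let V = ℂ³ with basis {u | v, h} (u even; v, h odd), bracket [u,v] = h, and α = diag(μ₀, μ₁₁, μ₀μ₁₁) with μ₀(μ₀² - 1)μ₁₁ ≠ 0 and additionally μ₁₁ ≠ 1, μ₀μ₁₁ ≠ 1, μ₀μ₁₁(μ₀μ₁₁ - 1) ≠ 0. Then every even skew-supersymmetric bilinear 2-cochain φ commuting with α that satisfies the 2-cocycle condition δ²φ = 0 is a coboundary δ¹ψ for some even linear ψ commuting with α. Consequently every infinitesimal deformation [·,·]_t = [·,·] + tφ of this Hom-Lie superalgebra is trivial (equivalent to the undeformed one via an automorphism of the form id + tφ₁). -/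
import Mathlib


namespace Stmt17

/-- V = ℂ³ with basis u = e₀ (even), v = e₁, h = e₂ (odd). -/
abbrev V : Type := Fin 3 → ℂ

def hom (p : Bool) (x : V) : Prop := if p then x 0 = 0 else (x 1 = 0 ∧ x 2 = 0)

def sg (b : Bool) : ℂ := if b then -1 else 1

/-- bracket: [u,v] = h = -[v,u], others zero. -/
def br (x y : V) : V := ![0, 0, x 0 * y 1 - x 1 * y 0]

/-- α = diag(μ₀, μ₁₁, μ₀μ₁₁). -/
def al (μ0 μ11 : ℂ) (x : V) : V := ![μ0 * x 0, μ11 * x 1, μ0 * μ11 * x 2]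

def IsLin (f : V → V) : Prop := ∀ (c : ℂ) (x y : V), f (c • x + y) = c • f x + f y

def IsBilin (f : V → V → V) : Prop :=
  (∀ y, IsLin (fun x => f x y)) ∧ (∀ x, IsLin (f x))

abbrev E0 : V := ![1,0,0]
abbrev E1 : V := ![0,1,0]
abbrev E2 : V := ![0,0,1]

lemma lin_zero {f : V → V} (h : IsLin f) : f 0 = 0 := by
  have h2 : f 0 = f 0 + f 0 := by simpa using h 1 0 0
  exact (left_eq_add.mp h2)

lemma lin_smul {f : V → V} (h : IsLin f) (c : ℂ) (x : V) : f (c • x) = c • f x := by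
  have := h c x 0
  rwa [add_zero, lin_zero h, add_zero] at this

lemma lin_add {f : V → V} (h : IsLin f) (x y : V) : f (x + y) = f x + f y := by
  have := h 1 x y; simpa using this

lemma lin_expand {f : V → V} (h : IsLin f) (x : V) :
    f x = x 0 • f E0 + x 1 • f E1 + x 2 • f E2 := by
  have hx : (x 0 • E0 + (x 1 • E1 + x 2 • E2) : V) = x := by
    funext i; fin_cases i <;> simp [E0, E1, E2]
  calc f x = f (x 0 • E0 + (x 1 • E1 + x 2 • E2)) := by rw [hx]
    _ = x 0 • f E0 + (x 1 • f E1 + x 2 • f E2) := by rw [h, h, lin_smul h]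
    _ = _ := by rw [← add_assoc]

lemma brdef (x y : V) : br x y = (x 0 * y 1 - x 1 * y 0) • E2 := by
  funext i; fin_cases i <;> simp [br, E2]

lemma elim {a x : ℂ} (ha : a ≠ 0) (h : a * x = 0) : x = 0 :=
  (mul_eq_zero.mp h).resolve_left ha

example : hom false E0 ∧ hom true E1 ∧ hom true E2 := by
  refine ⟨?_, ?_, ?_⟩ <;> simp [hom, E0, E1, E2]

lemma cancel {a b x : ℂ} (hne : a ≠ b) (h : a * x = b * x) : x = 0 := by
  have h2 : (a - b) * x = 0 := by linear_combination h
  exact (mul_eq_zero.mp h2).resolve_left (sub_ne_zero.mpr hne)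

lemma phi_char (μ0 μ11 : ℂ)
    (h1 : μ0 * (μ0 ^ 2 - 1) * μ11 ≠ 0) (h2 : μ11 ≠ 1) (h3 : μ0 * μ11 ≠ 1)
    (h4 : μ0 * μ11 * (μ0 * μ11 - 1) ≠ 0)
    (φ : V → V → V) (hbil : IsBilin φ)
    (heven : ∀ (px py : Bool) (x y : V), hom px x → hom py y → hom (xor px py) (φ x y))
    (hskew : ∀ (px py : Bool) (x y : V), hom px x → hom py y →
        φ y x = -(sg (px && py) • φ x y))
    (hcomm : ∀ x y : V, al μ0 μ11 (φ x y) = φ (al μ0 μ11 x) (al μ0 μ11 y))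
    (hcoc : ∀ (px py pz : Bool) (x y z : V), hom px x → hom py y → hom pz z →
        -(φ (br x y) (al μ0 μ11 z)) + sg (pz && py) • φ (br x z) (al μ0 μ11 y)
          + φ (al μ0 μ11 x) (br y z)
          + br (al μ0 μ11 x) (φ y z)
          - sg (py && px) • br (al μ0 μ11 y) (φ x z)
          + sg (pz && xor px py) • br (al μ0 μ11 z) (φ x y) = 0) :
    ∀ x y : V, φ x y = (φ E0 E1 2) • br x y := by
  obtain ⟨hbl, hbr2⟩ := hbil
  have hμ0 : μ0 ≠ 0 := by intro h; apply h1; rw [h]; ring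
  have hμ11 : μ11 ≠ 0 := by intro h; apply h1; rw [h]; ring
  have f1 : μ11 ≠ μ0 * μ11 := fun h => h1 (by linear_combination (-(μ0 * (μ0 + 1))) * h)
  have f2 : μ11 ≠ μ0 * (μ0 * μ11) := fun h => h1 (by linear_combination (-μ0) * h)
  have f3 : μ0 * μ11 ≠ μ0 * (μ0 * μ11) := fun h => h1 (by linear_combination (-(μ0+1)) * h)
  have hE0 : hom false E0 := by simp [hom, E0]
  have hE1 : hom true E1 := by simp [hom, E1]
  have hE2 : hom true E2 := by simp [hom, E2]
  have alE0 : al μ0 μ11 E0 = μ0 • E0 := by funext i; fin_cases i <;> simp [al, E0]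
  have alE1 : al μ0 μ11 E1 = μ11 • E1 := by funext i; fin_cases i <;> simp [al, E1]
  have alE2 : al μ0 μ11 E2 = (μ0 * μ11) • E2 := by funext i; fin_cases i <;> simp [al, E2]
  have brz : ∀ x : V, br x 0 = 0 := by intro x; funext i; fin_cases i <;> simp [br]
  have br11 : br E1 E1 = 0 := by funext i; fin_cases i <;> simp [br, E1]
  have br01 : br E0 E1 = E2 := by funext i; fin_cases i <;> simp [br, E0, E1, E2]
  have br02 : br E0 E2 = 0 := by funext i; fin_cases i <;> simp [br, E0, E2]
  have br12 : br E1 E2 = 0 := by funext i; fin_cases i <;> simp [br, E1, E2]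
  have φ0l : ∀ y, φ 0 y = 0 := fun y => lin_zero (hbl y)
  have φ0r : ∀ x, φ x 0 = 0 := fun x => lin_zero (hbr2 x)
  have φsl : ∀ (c : ℂ) (x y : V), φ (c • x) y = c • φ x y := fun c x y => lin_smul (hbl y) c x
  have φsr : ∀ (c : ℂ) (x y : V), φ x (c • y) = c • φ x y := fun c x y => lin_smul (hbr2 x) c y
  -- φ E0 E1
  have h01_0 : φ E0 E1 0 = 0 := by
    have := heven false true E0 E1 hE0 hE1
    simpa [hom] using this
  have h01_1 : φ E0 E1 1 = 0 := by
    have hc := hcomm E0 E1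
    rw [alE0, alE1, φsl, φsr, smul_smul] at hc
    have h := congrFun hc 1
    simp only [al, Matrix.cons_val_one, Matrix.head_cons, Pi.smul_apply, smul_eq_mul] at h
    exact cancel f1 h
  have h01 : φ E0 E1 = (φ E0 E1 2) • E2 := by
    funext i; fin_cases i <;> simp [E2, h01_0, h01_1]
  -- φ E0 E2 = 0
  have h02 : φ E0 E2 = 0 := by
    have hz : φ E0 E2 0 = 0 := by
      have := heven false true E0 E2 hE0 hE2
      simpa [hom] using this
    have hc := hcomm E0 E2
    rw [alE0, alE2, φsl, φsr, smul_smul] at hc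
    have ha := congrFun hc 1
    have hb := congrFun hc 2
    simp only [al, Matrix.cons_val_one, Matrix.head_cons, Matrix.cons_val_two,
      Matrix.tail_cons, Pi.smul_apply, smul_eq_mul] at ha hb
    funext i; fin_cases i
    · exact hz
    · exact cancel f2 ha
    · exact cancel f3 hb
  -- cocycle at (E1,E1,E1): φ E1 E1 = 0
  have A := hcoc true true true E1 E1 E1 hE1 hE1 hE1
  rw [br11, alE1, φ0l, φ0r] at A
  have A2 := congrFun A 2
  simp [sg, br, E1, E2] at A2
  have h11_0 : φ E1 E1 0 = 0 := by
    have key : (3 * μ11) * (φ E1 E1 0) = 0 := by linear_combination -A2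
    exact elim (mul_ne_zero (by norm_num : (3:ℂ) ≠ 0) hμ11) key
  -- φ E1 E1 = 0
  have h11 : φ E1 E1 = 0 := by
    have he := heven true true E1 E1 hE1 hE1
    simp [hom] at he
    funext i; fin_cases i
    · exact h11_0
    · exact he.1
    · exact he.2
  -- φ E2 E1 = 0 and φ E1 E2 = 0
  have h21 : φ E2 E1 = 0 := by
    have he := heven true true E2 E1 hE2 hE1
    simp [hom] at he
    have B := hcoc false true true E0 E1 E1 hE0 hE1 hE1
    rw [br01, br11, alE0, alE1, φ0r, h11, brz, φsr] at B
    have B0 := congrFun B 0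
    simp [sg, br, E1, E2, Matrix.vecHead, Pi.smul_apply] at B0
    have h0 : φ E2 E1 0 = 0 := B0.resolve_left hμ11
    funext i; fin_cases i
    · exact h0
    · exact he.1
    · exact he.2
  have h12 : φ E1 E2 = 0 := by
    have hs := hskew true true E1 E2 hE1 hE2
    rw [h21] at hs
    simpa [sg] using hs.symm
  -- φ E2 E2 = 0
  have h22 : φ E2 E2 = 0 := by
    have he := heven true true E2 E2 hE2 hE2
    simp [hom] at he
    have C := hcoc false true true E0 E1 E2 hE0 hE1 hE2
    rw [br01, br02, br12, alE0, alE1, alE2, φ0l, φ0r, h12, h02, brz, φsr] at C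
    have C0 := congrFun C 0
    simp [sg, br, E1, E2, Matrix.vecHead, Pi.smul_apply] at C0
    have h0 : φ E2 E2 0 = 0 := C0.resolve_left (not_or.mpr ⟨hμ0, hμ11⟩)
    funext i; fin_cases i
    · exact h0
    · exact he.1
    · exact he.2
  -- skew consequences
  have h00 : φ E0 E0 = 0 := by
    have hs : φ E0 E0 = -(φ E0 E0) := by simpa [sg] using hskew false false E0 E0 hE0 hE0
    have h2' : (2:ℂ) • φ E0 E0 = 0 := by rw [two_smul]; nth_rewrite 2 [hs]; simp
    exact (smul_eq_zero.mp h2').resolve_left (by norm_num)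
  have h10 : φ E1 E0 = -(φ E0 E1) := by simpa [sg] using hskew false true E0 E1 hE0 hE1
  have h20 : φ E2 E0 = 0 := by
    have := hskew false true E0 E2 hE0 hE2
    simpa [sg, h02] using this
  -- expansion
  intro x y
  have ex : φ x y = x 0 • φ E0 y + x 1 • φ E1 y + x 2 • φ E2 y := lin_expand (hbl y) x
  have ey0 : φ E0 y = y 0 • φ E0 E0 + y 1 • φ E0 E1 + y 2 • φ E0 E2 := lin_expand (hbr2 E0) y
  have ey1 : φ E1 y = y 0 • φ E1 E0 + y 1 • φ E1 E1 + y 2 • φ E1 E2 := lin_expand (hbr2 E1) y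
  have ey2 : φ E2 y = y 0 • φ E2 E0 + y 1 • φ E2 E1 + y 2 • φ E2 E2 := lin_expand (hbr2 E2) y
  rw [ex, ey0, ey1, ey2, h00, h02, h10, h11, h12, h20, h21, h22, brdef x y, h01]
  funext i; fin_cases i <;> simp [E2] <;> ring

theorem stmt17 (μ0 μ11 : ℂ)
    (h1 : μ0 * (μ0 ^ 2 - 1) * μ11 ≠ 0) (h2 : μ11 ≠ 1) (h3 : μ0 * μ11 ≠ 1)
    (h4 : μ0 * μ11 * (μ0 * μ11 - 1) ≠ 0)
    (φ : V → V → V) (hbil : IsBilin φ)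
    (heven : ∀ (px py : Bool) (x y : V), hom px x → hom py y → hom (xor px py) (φ x y))
    (hskew : ∀ (px py : Bool) (x y : V), hom px x → hom py y →
        φ y x = -(sg (px && py) • φ x y))
    (hcomm : ∀ x y : V, al μ0 μ11 (φ x y) = φ (al μ0 μ11 x) (al μ0 μ11 y))
    -- 2-cocycle condition δ²φ = 0 on homogeneous elements
    (hcoc : ∀ (px py pz : Bool) (x y z : V), hom px x → hom py y → hom pz z →
        -(φ (br x y) (al μ0 μ11 z)) + sg (pz && py) • φ (br x z) (al μ0 μ11 y)
          + φ (al μ0 μ11 x) (br y z)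
          + br (al μ0 μ11 x) (φ y z)
          - sg (py && px) • br (al μ0 μ11 y) (φ x z)
          + sg (pz && xor px py) • br (al μ0 μ11 z) (φ x y) = 0) :
    -- φ is a 2-coboundary …
    (∃ ψ : V → V, IsLin ψ ∧ (∀ (p : Bool) (x : V), hom p x → hom p (ψ x)) ∧
      (∀ x : V, al μ0 μ11 (ψ x) = ψ (al μ0 μ11 x)) ∧
      ∀ (px py : Bool) (x y : V), hom px x → hom py y →
        φ x y = -(ψ (br x y)) + br x (ψ y) - sg (py && px) • br y (ψ x)) ∧
    -- … and consequently every infinitesimal deformation [·,·]_t = [·,·] + tφ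
    -- is trivial: it is equivalent to the undeformed algebra via Φ_t = id + tφ₁.
    ((∀ (t : ℂ) (px py pz : Bool) (x y z : V), hom px x → hom py y → hom pz z →
        sg (px && pz) • (br (al μ0 μ11 x) (br y z + t • φ y z)
            + t • φ (al μ0 μ11 x) (br y z + t • φ y z))
          + sg (py && px) • (br (al μ0 μ11 y) (br z x + t • φ z x)
            + t • φ (al μ0 μ11 y) (br z x + t • φ z x))
          + sg (pz && py) • (br (al μ0 μ11 z) (br x y + t • φ x y)
            + t • φ (al μ0 μ11 z) (br x y + t • φ x y)) = 0) →
      ∃ φ1 : V → V, IsLin φ1 ∧ (∀ (p : Bool) (x : V), hom p x → hom p (φ1 x)) ∧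
        (∀ x : V, al μ0 μ11 (φ1 x) = φ1 (al μ0 μ11 x)) ∧
        ∀ (t : ℂ) (x y : V),
          (br x y + t • φ x y) + t • φ1 (br x y + t • φ x y)
            = br (x + t • φ1 x) (y + t • φ1 y)) := by

  classical
  have hφ := phi_char μ0 μ11 h1 h2 h3 h4 φ hbil heven hskew hcomm hcoc
  set b : ℂ := φ E0 E1 2 with hb
  have pLin : IsLin (fun x : V => (b * x 0) • E0) := by
    intro c x y
    funext i; fin_cases i <;> simp [E0] <;> ring
  have pHom : ∀ (p : Bool) (x : V), hom p x → hom p ((b * x 0) • E0) := by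
    intro p x hx
    cases p
    · simp [hom, E0]
    · simp [hom] at hx ⊢
      simp [E0, hx]
  have pAl : ∀ x : V, al μ0 μ11 ((b * x 0) • E0) = (b * (al μ0 μ11 x) 0) • E0 := by
    intro x
    funext i; fin_cases i <;> simp [al, E0] <;> ring
  constructor
  · refine ⟨fun x => (b * x 0) • E0, pLin, pHom, pAl, ?_⟩
    intro px py x y hx hy
    rw [hφ x y]
    cases px <;> cases py
    · funext i; fin_cases i <;> simp [br, sg, E0] <;> ring
    · funext i; fin_cases i <;> simp [br, sg, E0] <;> ring
    · funext i; fin_cases i <;> simp [br, sg, E0] <;> ring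
    · have hx0 : x 0 = 0 := by simpa [hom] using hx
      have hy0 : y 0 = 0 := by simpa [hom] using hy
      funext i; fin_cases i <;> simp [br, sg, E0, hx0, hy0] <;> ring
  · intro _
    refine ⟨fun x => (b * x 0) • E0, pLin, pHom, pAl, ?_⟩
    intro t x y
    rw [hφ x y]
    funext i; fin_cases i <;> simp [br, E0] <;> ring


end Stmt17
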